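/- Let r ≥ 1 and let z = (z₀⁽¹⁾, z₁⁽¹⁾, z₀⁽²⁾, z₁⁽²⁾) ∈ Mat(2r × 4r, ℂ) be written in blocks in Mat(2r × r, ℂ), and assume det(z₀⁽¹⁾ | z₁⁽¹⁾) ≠ 0, det(z₀⁽²⁾ | z₁⁽²⁾) ≠ 0 and det(z₀⁽¹⁾ | z₀⁽²⁾) ≠ 0. Then there exist g ∈ GL(2r, ℂ), h ∈ H_{(2,2)}, and x' ∈ GL(r, ℂ) such that g · z · h is the 2r×4r matrix with block rows (1_r, 0, 0, x') and (0, 1_r, 1_r, 0). -/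

import Mathlib

/-! Multiplying on the left by `P⁻¹`, `P = (z₀⁽¹⁾ | z₀⁽²⁾)`, turns `z₀⁽¹⁾, z₀⁽²⁾` into the
standard blocks `(1; 0)`, `(0; 1)` and writes `z₁⁽¹⁾ = (a; b)`, `z₁⁽²⁾ = (c; d)`; the two other
nondegeneracy conditions then say exactly that `b` and `c` are invertible. Finally `diag(1, b⁻¹)` on
the left and `h₀ = 1, h₁ = -a, k₀ = b, k₁ = -d b` on the right clear `a` and `d`, leaving
`x' = c b`. -/

open Matrix

/-- The `2r × nr` matrix assembled from `n` block columns of size `2r × r`. -/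
def ofBlockCols (r n : ℕ) (z : Fin n → Matrix (Fin r ⊕ Fin r) (Fin r) ℂ) :
    Matrix (Fin r ⊕ Fin r) (Fin n × Fin r) ℂ :=
  Matrix.of fun i jk => z jk.1 i jk.2

/-- The `nr × nr` matrix assembled from an `n × n` array of `r × r` blocks. -/
def ofBlockMat (r n : ℕ) (H : Fin n → Fin n → Matrix (Fin r) (Fin r) ℂ) :
    Matrix (Fin n × Fin r) (Fin n × Fin r) ℂ :=
  Matrix.of fun jk lk => H jk.1 lk.1 jk.2 lk.2

lemma fromRows_add {R m₁ m₂ n : Type*} [Add R] (A₁ B₁ : Matrix m₁ n R) (A₂ B₂ : Matrix m₂ n R) :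
    fromRows A₁ A₂ + fromRows B₁ B₂ = fromRows (A₁ + B₁) (A₂ + B₂) := by
  ext (i | i) j <;> rfl

section Blocks

variable {R : Type*} [CommRing R] {m n : Type*} [Fintype m] [Fintype n] [DecidableEq m]
  [DecidableEq n]

lemma nonsing_inv_fromCols_mul (u : Matrix (m ⊕ n) m R) (v : Matrix (m ⊕ n) n R)
    (h : IsUnit (fromCols u v).det) :
    (fromCols u v)⁻¹ * u = fromRows (1 : Matrix m m R) 0 ∧
      (fromCols u v)⁻¹ * v = fromRows 0 (1 : Matrix n n R) := by
  rw [← fromCols_ext_iff, ← mul_fromCols, nonsing_inv_mul _ h, fromCols_fromRows_eq_fromBlocks,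
    fromBlocks_one]

lemma isUnit_det_toRows₂_of_fromCols_fromRows_one_zero (v : Matrix (m ⊕ n) n R)
    (h : IsUnit (fromCols (fromRows (1 : Matrix m m R) 0) v).det) : IsUnit v.toRows₂.det := by
  rwa [← fromRows_toRows v, fromCols_fromRows_eq_fromBlocks, det_fromBlocks_zero₂₁, det_one,
    one_mul] at h

lemma isUnit_det_toRows₁_of_fromCols_fromRows_zero_one (v : Matrix (m ⊕ m) m R)
    (h : IsUnit (fromCols (fromRows 0 (1 : Matrix m m R)) v).det) : IsUnit v.toRows₁.det := by
  have hswap : fromCols (fromRows 0 1) v =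
      (fromBlocks (1 : Matrix m m R) v.toRows₂ 0 v.toRows₁).submatrix (Equiv.sumComm m m) id := by
    ext (i | i) (j | j) <;> rfl
  rw [hswap, det_permute, det_fromBlocks_zero₂₁, det_one, one_mul] at h
  exact isUnit_of_mul_isUnit_right h

end Blocks

section BlockCols

variable {r n : ℕ}

lemma mul_ofBlockCols (g : Matrix (Fin r ⊕ Fin r) (Fin r ⊕ Fin r) ℂ)
    (z : Fin n → Matrix (Fin r ⊕ Fin r) (Fin r) ℂ) :
    g * ofBlockCols r n z = ofBlockCols r n fun j => g * z j := by
  ext i jk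
  simp [ofBlockCols, mul_apply]

lemma ofBlockCols_mul_ofBlockMat (z : Fin n → Matrix (Fin r ⊕ Fin r) (Fin r) ℂ)
    (H : Fin n → Fin n → Matrix (Fin r) (Fin r) ℂ) :
    ofBlockCols r n z * ofBlockMat r n H = ofBlockCols r n fun j => ∑ l, z l * H l j := by
  ext i jk
  simp [ofBlockCols, ofBlockMat, mul_apply, Matrix.sum_apply, Fintype.sum_prod_type]

lemma ofBlockCols_mul_ofBlockMat_J22 (w : Fin 4 → Matrix (Fin r ⊕ Fin r) (Fin r) ℂ)
    (h₀ h₁ k₀ k₁ : Matrix (Fin r) (Fin r) ℂ) :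
    ofBlockCols r 4 w * ofBlockMat r 4
        ![![h₀, h₁, 0, 0], ![0, h₀, 0, 0], ![0, 0, k₀, k₁], ![0, 0, 0, k₀]] =
      ofBlockCols r 4 ![w 0 * h₀, w 0 * h₁ + w 1 * h₀, w 2 * k₀, w 2 * k₁ + w 3 * k₀] := by
  rw [ofBlockCols_mul_ofBlockMat]
  congr 1
  funext j
  fin_cases j <;> simp [Fin.sum_univ_four]

lemma ofBlockCols_mul_ofBlockMat_J22_of_normalized (a b c d : Matrix (Fin r) (Fin r) ℂ)
    (hb : IsUnit b.det) :
    (fromBlocks 1 0 0 b⁻¹ : Matrix (Fin r ⊕ Fin r) (Fin r ⊕ Fin r) ℂ) *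
        ofBlockCols r 4 ![fromRows 1 0, fromRows a b, fromRows 0 1, fromRows c d] *
        ofBlockMat r 4 ![![1, -a, 0, 0], ![0, 1, 0, 0], ![0, 0, b, -(d * b)], ![0, 0, 0, b]] =
      ofBlockCols r 4 ![fromRows 1 0, fromRows 0 1, fromRows 0 1, fromRows (c * b) 0] := by
  rw [mul_ofBlockCols, ofBlockCols_mul_ofBlockMat_J22]
  congr 1
  funext j
  fin_cases j <;>
    simp [fromBlocks_mul_fromRows, fromRows_mul, fromRows_add, nonsing_inv_mul _ hb,
      ← Matrix.mul_assoc]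

end BlockCols

theorem normal_form_partition_22_second_general (r : ℕ)
    (z : Fin 4 → Matrix (Fin r ⊕ Fin r) (Fin r) ℂ)
    (h01 : (fromCols (z 0) (z 1)).det ≠ 0)
    (h23 : (fromCols (z 2) (z 3)).det ≠ 0)
    (h02 : (fromCols (z 0) (z 2)).det ≠ 0) :
    ∃ (g : GL (Fin r ⊕ Fin r) ℂ) (h₀ k₀ : GL (Fin r) ℂ)
      (h₁ k₁ : Matrix (Fin r) (Fin r) ℂ) (x : GL (Fin r) ℂ),
      (g : Matrix (Fin r ⊕ Fin r) (Fin r ⊕ Fin r) ℂ) * ofBlockCols r 4 z *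
          ofBlockMat r 4
            ![![(h₀ : Matrix (Fin r) (Fin r) ℂ), h₁, 0, 0],
              ![0, (h₀ : Matrix (Fin r) (Fin r) ℂ), 0, 0],
              ![0, 0, (k₀ : Matrix (Fin r) (Fin r) ℂ), k₁],
              ![0, 0, 0, (k₀ : Matrix (Fin r) (Fin r) ℂ)]] =
        ofBlockCols r 4
          ![fromRows 1 0, fromRows 0 1, fromRows 0 1,
            fromRows (x : Matrix (Fin r) (Fin r) ℂ) 0] := by
  set P := fromCols (z 0) (z 2)
  have hP : IsUnit P.det := isUnit_iff_ne_zero.mpr h02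
  obtain ⟨hw0, hw2⟩ : P⁻¹ * z 0 = fromRows 1 0 ∧ P⁻¹ * z 2 = fromRows 0 1 :=
    nonsing_inv_fromCols_mul _ _ hP
  have hPz (i j : Fin 4) (h : (fromCols (z i) (z j)).det ≠ 0) :
      IsUnit (fromCols (P⁻¹ * z i) (P⁻¹ * z j)).det := by
    rw [← mul_fromCols, det_mul]
    exact (isUnit_nonsing_inv_det P hP).mul (isUnit_iff_ne_zero.mpr h)
  set a := (P⁻¹ * z 1).toRows₁
  set b := (P⁻¹ * z 1).toRows₂
  set c := (P⁻¹ * z 3).toRows₁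
  set d := (P⁻¹ * z 3).toRows₂
  have hb : IsUnit b.det :=
    isUnit_det_toRows₂_of_fromCols_fromRows_one_zero _ (hw0 ▸ hPz 0 1 h01)
  have hc : IsUnit c.det :=
    isUnit_det_toRows₁_of_fromCols_fromRows_zero_one _ (hw2 ▸ hPz 2 3 h23)
  have hw : P⁻¹ * ofBlockCols r 4 z =
      ofBlockCols r 4 ![fromRows 1 0, fromRows a b, fromRows 0 1, fromRows c d] := by
    rw [mul_ofBlockCols, fromRows_toRows, fromRows_toRows]
    congr 1
    funext j
    fin_cases j <;> simp [hw0, hw2]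
  have hg : IsUnit (fromBlocks 1 0 0 b⁻¹ * P⁻¹) := by
    simpa [isUnit_iff_isUnit_det] using
      (isUnit_nonsing_inv_det b hb).mul (isUnit_nonsing_inv_det P hP)
  refine ⟨hg.unit, 1, ((isUnit_iff_isUnit_det b).mpr hb).unit, -a, -(d * b),
    ((isUnit_iff_isUnit_det (c * b)).mpr (by simpa using hc.mul hb)).unit, ?_⟩
  simpa [Matrix.mul_assoc, hw] using ofBlockCols_mul_ofBlockMat_J22_of_normalized a b c d hb

/-- Normal form lemma (form `x₂`) for `(m, N) = (2r, 4r)`, partition `λ = (2,2)`: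
`z = (z₀⁽¹⁾, z₁⁽¹⁾, z₀⁽²⁾, z₁⁽²⁾)` with the stated nondegeneracy conditions can be
brought, by the action of `GL(2r, ℂ) × H_{(2,2)}`, to the normal form with block rows
`(1_r, 0, 0, x')` and `(0, 1_r, 1_r, 0)` with `x' ∈ GL(r, ℂ)`. -/
theorem normal_form_partition_22_second (r : ℕ) (hr : 1 ≤ r)
    (z : Fin 4 → Matrix (Fin r ⊕ Fin r) (Fin r) ℂ)
    (h01 : (fromCols (z 0) (z 1)).det ≠ 0)
    (h23 : (fromCols (z 2) (z 3)).det ≠ 0)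
    (h02 : (fromCols (z 0) (z 2)).det ≠ 0) :
    ∃ (g : GL (Fin r ⊕ Fin r) ℂ) (h₀ k₀ : GL (Fin r) ℂ)
      (h₁ k₁ : Matrix (Fin r) (Fin r) ℂ) (x : GL (Fin r) ℂ),
      (g : Matrix (Fin r ⊕ Fin r) (Fin r ⊕ Fin r) ℂ) * ofBlockCols r 4 z *
          ofBlockMat r 4
            ![![(h₀ : Matrix (Fin r) (Fin r) ℂ), h₁, 0, 0],
              ![0, (h₀ : Matrix (Fin r) (Fin r) ℂ), 0, 0],
              ![0, 0, (k₀ : Matrix (Fin r) (Fin r) ℂ), k₁],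
              ![0, 0, 0, (k₀ : Matrix (Fin r) (Fin r) ℂ)]] =
        ofBlockCols r 4
          ![fromRows 1 0, fromRows 0 1, fromRows 0 1,
            fromRows (x : Matrix (Fin r) (Fin r) ℂ) 0] :=
  normal_form_partition_22_second_general r z h01 h23 h02
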